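/- For all integers d ≥ 1, n ≥ 1 and 0 ≤ k ≤ d, the recurrence D(d,n,k) = (nk+1)·D(d-1,n,k) + (n(d-k)+(n-1))·D(d-1,n,k-1) holds, where D(d,n,k) := Σ_{i=0}^{k} (-1)^i · C(d+1,i) · (n(k-i)+1)^d. -/

import Mathlib

/-!
Write `x = n(k-i)+1` for the base of the `i`-th summand of `D(d,n,k)`; it is also the base of the
`(i-1)`-st summand of `D(d-1,n,k-1)`. Splitting `x^d = x · x^(d-1)` and using Pascal's rule together
with `i·C(d+1,i) = (d+1)·C(d,i-1)` gives the recurrence summand by summand; the `i = 0` summand,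
which has no partner, is matched by the first summand of `(nk+1)·D(d-1,n,k)`.
-/

/-- The descent polynomial coefficient `D(d,n,k)` (for integer `k`, zero when `k < 0`),
via its explicit alternating-sum formula. -/
noncomputable def D (d n : ℕ) (k : ℤ) : ℝ :=
  if k < 0 then 0 else
    ∑ i ∈ Finset.range (k.toNat + 1),
      (-1 : ℝ) ^ i * ((d + 1).choose i : ℝ) * ((n : ℝ) * ((k : ℝ) - i) + 1) ^ d

open Finset

namespace DescentPoly

variable {R : Type*} [CommRing R] (a : R)

lemma choose_succ_succ_mul_sub (m i : ℕ) (b : R) :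
    ((m + 2).choose (i + 1) : R) * (b - a * (i + 1)) =
      b * (m + 1).choose (i + 1) - (a * (m + 2) - b) * (m + 1).choose i := by
  have pascal : ((m + 2).choose (i + 1) : R) = (m + 1).choose (i + 1) + (m + 1).choose i := by
    push_cast [Nat.choose_succ_succ (m + 1) i]
    ring
  have absorb : ((m : R) + 2) * (m + 1).choose i = (m + 2).choose (i + 1) * ((i : R) + 1) := by
    have h := congrArg (Nat.cast : ℕ → R) (Nat.add_one_mul_choose_eq (m + 1) i)
    push_cast at h
    linear_combination h
  linear_combination b * pascal + a * absorb

def term (d k i : ℕ) : R :=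
  (-1) ^ i * ((d + 1).choose i : R) * (a * ((k : R) - i) + 1) ^ d

def descentSum (d k : ℕ) : R :=
  ∑ i ∈ range (k + 1), term a d k i

lemma term_zero (d k : ℕ) : term a d k 0 = (a * k + 1) ^ d := by
  simp [term]

lemma term_succ_succ (m k i : ℕ) :
    term a (m + 1) (k + 1) (i + 1) =
      (a * (k + 1) + 1) * term a m (k + 1) (i + 1) +
        (a * (m + 2) - (a * (k + 1) + 1)) * term a m k i := by
  have base : a * (((k + 1 : ℕ) : R) - (i + 1 : ℕ)) + 1 = (a * (k + 1) + 1) - a * (i + 1) := by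
    push_cast; ring
  have base' : a * ((k : R) - i) + 1 = (a * (k + 1) + 1) - a * (i + 1) := by ring
  simp only [term, base, base', pow_succ]
  linear_combination
    (-1) ^ (i + 1) * ((a * (k + 1) + 1) - a * (i + 1)) ^ m *
      choose_succ_succ_mul_sub a m i (a * (k + 1) + 1)

lemma descentSum_zero (d : ℕ) : descentSum a d 0 = 1 := by
  simp [descentSum, term_zero]

lemma descentSum_succ_succ (m k : ℕ) :
    descentSum a (m + 1) (k + 1) =
      (a * (k + 1) + 1) * descentSum a m (k + 1) +
        (a * (m + 2) - (a * (k + 1) + 1)) * descentSum a m k := by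
  simp only [descentSum, sum_range_succ' _ (k + 1), term_succ_succ, sum_add_distrib, ← mul_sum,
    term_zero, Nat.cast_succ]
  ring

end DescentPoly

open DescentPoly

lemma D_natCast (d n k : ℕ) : D d n k = descentSum (n : ℝ) d k := by
  simp [D, descentSum, term]

lemma D_of_neg (d n : ℕ) {k : ℤ} (hk : k < 0) : D d n k = 0 := by
  simp [D, hk]

theorem descent_poly_recurrence_general (d n : ℕ) (k : ℤ) (hd : 1 ≤ d) :
    D d n k = ((n : ℝ) * k + 1) * D (d - 1) n k +
      ((n : ℝ) * ((d : ℝ) - k) + ((n : ℝ) - 1)) * D (d - 1) n (k - 1) := by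
  obtain ⟨m, rfl⟩ := Nat.exists_eq_add_of_le' hd
  rw [Nat.add_sub_cancel]
  rcases lt_or_ge k 0 with hk | hk
  · simp [D_of_neg _ _ hk, D_of_neg _ _ (show k - 1 < 0 by omega)]
  lift k to ℕ using hk
  cases k with
  | zero =>
    rw [D_of_neg m n (k := ((0 : ℕ) : ℤ) - 1) (by norm_num), D_natCast, D_natCast,
      descentSum_zero, descentSum_zero]
    ring
  | succ K =>
    have hK : ((K + 1 : ℕ) : ℤ) - 1 = K := by push_cast; ring
    rw [hK, D_natCast, D_natCast, D_natCast, descentSum_succ_succ]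
    push_cast
    ring

theorem descent_poly_recurrence (d n : ℕ) (k : ℤ) (hd : 1 ≤ d) (hn : 1 ≤ n)
    (hk0 : 0 ≤ k) (hkd : k ≤ (d : ℤ)) :
    D d n k = ((n : ℝ) * k + 1) * D (d - 1) n k +
      ((n : ℝ) * ((d : ℝ) - k) + ((n : ℝ) - 1)) * D (d - 1) n (k - 1) :=
  descent_poly_recurrence_general d n k hd
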